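/- arXiv:2509.05770 — 6 statements merged into one kernel-verified Lean document; each statement's English description precedes it below -/
import Mathlib

section
/- Let V be a finite-dimensional vector space over a field F with dim V = n > 1, let G ≤ GL(V) be a finite irreducible subgroup, and let g ∈ G. Suppose G is generated by k conjugates of g, and let d = dim((g − λ·Id)V) for some λ ∈ F. Then n ≤ d·k. -/
/-!
The subspace `W = ∑ᵢ (gᵢ - λ)V` is invariant under every `gᵢ`, since `gᵢ v = (gᵢ - λ) v + λ v`,
hence under `G`. If `W = 0`, every `gᵢ` is the scalar `λ`, so every line would be `G`-invariant,
which irreducibility forbids when `n > 1`. So `W = V`, and as conjugation preserves the rank of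
`g - λ`, `n = dim W ≤ ∑ᵢ dim (gᵢ - λ)V = k d`.
-/

open Module Module.End Submodule LinearMap

section DivisionRing

variable {K V : Type*} [DivisionRing K] [AddCommGroup V] [Module K V]

lemma Submodule.finrank_map_units (u : (V →ₗ[K] V)ˣ) (S : Submodule K V) :
    finrank K (S.map (u : V →ₗ[K] V)) = finrank K S :=
  (GeneralLinearGroup.toLinearEquiv u).finrank_map_eq S

lemma Module.End.mem_invtSubmodule_units_inv [FiniteDimensional K V] {u : (V →ₗ[K] V)ˣ}
    {S : Submodule K V} (h : S ∈ invtSubmodule (u : V →ₗ[K] V)) :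
    S ∈ invtSubmodule (↑u⁻¹ : V →ₗ[K] V) := by
  have hu : S.map (u : V →ₗ[K] V) = S :=
    eq_of_le_of_finrank_eq ((mem_invtSubmodule_iff_map_le _).mp h) (S.finrank_map_units u)
  intro v hv
  rw [← hu] at hv
  obtain ⟨w, hw, rfl⟩ := hv
  show (↑u⁻¹ * ↑u : V →ₗ[K] V) w ∈ S
  rwa [u.inv_mul]

def Submodule.invtUnits [FiniteDimensional K V] (S : Submodule K V) :
    Subgroup (V →ₗ[K] V)ˣ where
  carrier := {u | S ∈ invtSubmodule (u : V →ₗ[K] V)}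
  one_mem' _ hv := hv
  mul_mem' hu hv := invtSubmodule.comp _ hu hv
  inv_mem' := mem_invtSubmodule_units_inv

lemma Submodule.finrank_finset_sup_le_sum [FiniteDimensional K V] {ι : Type*} (s : Finset ι)
    (W : ι → Submodule K V) : finrank K ↥(s.sup W) ≤ ∑ i ∈ s, finrank K (W i) := by
  classical
  induction s using Finset.induction_on with
  | empty => simp
  | insert i s hi ih =>
    rw [Finset.sup_insert, Finset.sum_insert hi]
    exact (finrank_add_le_finrank_add_finrank _ _).trans (by omega)

lemma finrank_le_one_of_forall_eq_bot_or_eq_top (h : ∀ S : Submodule K V, S = ⊥ ∨ S = ⊤) :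
    finrank K V ≤ 1 := by
  rcases subsingleton_or_nontrivial V with hV | hV
  · simp [finrank_zero_of_subsingleton]
  · have : IsSimpleModule K V := { eq_bot_or_eq_top := h }
    exact (isSimpleModule_iff_finrank_eq_one.mp this).le

end DivisionRing

section Field

variable {K V : Type*} [Field K] [AddCommGroup V] [Module K V]

lemma Module.End.mem_invtSubmodule_of_range_sub_smul_le {f : V →ₗ[K] V} {c : K}
    {S : Submodule K V} (h : range (f - c • LinearMap.id : V →ₗ[K] V) ≤ S) :
    S ∈ invtSubmodule f := by
  intro v hv
  have hfv : f v = (f - c • LinearMap.id : V →ₗ[K] V) v + c • v := by simp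
  show f v ∈ S
  rw [hfv]
  exact S.add_mem (h (mem_range_self _ v)) (S.smul_mem c hv)

lemma finrank_range_units_conj_sub_smul (x : (V →ₗ[K] V)ˣ) (f : V →ₗ[K] V) (c : K) :
    finrank K (range ((x : V →ₗ[K] V) * f * (↑x⁻¹ : V →ₗ[K] V) - c • LinearMap.id)) =
    finrank K (range (f - c • LinearMap.id)) := by
  have hfactor : (x : V →ₗ[K] V) * f * (↑x⁻¹ : V →ₗ[K] V) - c • LinearMap.id =
      (x : V →ₗ[K] V) ∘ₗ (f - c • LinearMap.id) ∘ₗ ↑x⁻¹ := by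
    rw [← Module.End.one_eq_id, ← mul_eq_comp, ← mul_eq_comp, sub_mul, mul_sub, smul_mul_assoc,
      one_mul, mul_smul_comm, Units.mul_inv, mul_assoc]
  rw [hfactor, range_comp, range_comp_of_range_eq_top, finrank_map_units]
  exact range_eq_top.mpr (GeneralLinearGroup.toLinearEquiv x⁻¹).surjective

end Field

theorem stmt0_general {F V : Type*} [Field F] [AddCommGroup V] [Module F V] [FiniteDimensional F V]
    (n : ℕ) (hn : Module.finrank F V = n) (h1 : 1 < n)
    (G : Subgroup (V →ₗ[F] V)ˣ)
    (hirr : ∀ W : Submodule F V,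
      (∀ x ∈ G, ∀ v ∈ W, ((x : (V →ₗ[F] V)ˣ) : V →ₗ[F] V) v ∈ W) → W = ⊥ ∨ W = ⊤)
    (g : (V →ₗ[F] V)ˣ)
    (k : ℕ) (gs : Fin k → (V →ₗ[F] V)ˣ)
    (hconj : ∀ i, ∃ x ∈ G, gs i = x * g * x⁻¹)
    (hgen : Subgroup.closure (Set.range gs) = G)
    (lam : F) (d : ℕ)
    (hd : d = Module.finrank F
      (LinearMap.range ((g : V →ₗ[F] V) - lam • (LinearMap.id : V →ₗ[F] V)))) :
    n ≤ d * k := by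
  set W : Fin k → Submodule F V := fun i => range ((gs i : V →ₗ[F] V) - lam • LinearMap.id)
  have hinvt : ∀ S, (⨆ i, W i) ≤ S → G ≤ S.invtUnits := fun S hS =>
    hgen ▸ (Subgroup.closure_le _).mpr (Set.range_subset_iff.mpr fun i =>
      mem_invtSubmodule_of_range_sub_smul_le ((le_iSup W i).trans hS))
  have hdim : ∀ i, finrank F (W i) = d := fun i => by
    obtain ⟨x, -, hx⟩ := hconj i
    rw [hd, ← finrank_range_units_conj_sub_smul x (g : V →ₗ[F] V), ← Units.val_mul,
      ← Units.val_mul, ← hx]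
  rcases hirr _ fun x hx => hinvt _ le_rfl hx with hbot | htop
  · have := finrank_le_one_of_forall_eq_bot_or_eq_top fun S =>
      hirr S fun x hx => hinvt S (hbot ▸ bot_le) hx
    omega
  · calc n = finrank F ↥(⨆ i, W i) := by rw [htop, finrank_top, hn]
      _ ≤ ∑ i, finrank F (W i) := by
        rw [← Finset.sup_univ_eq_iSup]; exact finrank_finset_sup_le_sum _ _
      _ = d * k := by simp [hdim, mul_comm]

/-- If a finite irreducible linear group `G ≤ GL(V)`, with `dim V = n > 1`, is generated by
`k` conjugates of `g`, and `d = dim ((g - λ·Id) V)`, then `n ≤ d * k`. -/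
theorem stmt0 {F V : Type*} [Field F] [AddCommGroup V] [Module F V] [FiniteDimensional F V]
    (n : ℕ) (hn : Module.finrank F V = n) (h1 : 1 < n)
    (G : Subgroup (V →ₗ[F] V)ˣ) [Finite G]
    (hirr : ∀ W : Submodule F V,
      (∀ x ∈ G, ∀ v ∈ W, ((x : (V →ₗ[F] V)ˣ) : V →ₗ[F] V) v ∈ W) → W = ⊥ ∨ W = ⊤)
    (g : (V →ₗ[F] V)ˣ) (hg : g ∈ G)
    (k : ℕ) (gs : Fin k → (V →ₗ[F] V)ˣ)
    (hconj : ∀ i, ∃ x ∈ G, gs i = x * g * x⁻¹)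
    (hgen : Subgroup.closure (Set.range gs) = G)
    (lam : F) (d : ℕ)
    (hd : d = Module.finrank F
      (LinearMap.range ((g : V →ₗ[F] V) - lam • (LinearMap.id : V →ₗ[F] V)))) :
    n ≤ d * k :=
  stmt0_general n hn h1 G hirr g k gs hconj hgen lam d hd
end

section
/- Let M₁, M₂ be diagonal non-scalar matrices over a field such that M = M₁ ⊗ M₂ is almost cyclic and each M_i is similar to its inverse M_i^{-1}. Then every eigenvalue multiplicity of M is at most 2, and if e is an eigenvalue of M of multiplicity 2 then e ∈ {1, −1}. -/
open Matrix Polynomial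

/-- A square matrix is cyclic if its characteristic polynomial coincides with its minimal
polynomial. -/
def IsCyclicMat {K : Type*} [Field K] {ι : Type*} [Fintype ι] [DecidableEq ι]
    (A : Matrix ι ι K) : Prop :=
  A.charpoly = minpoly K A

/-- A square matrix `M` of size `s` is almost cyclic if for some scalar `α` it is similar to
a block-diagonal matrix `diag(α·Id_k, M₁)` with `M₁` cyclic and `0 ≤ k < s`. -/
def IsAlmostCyclicMat {K : Type*} [Field K] {ι : Type*} [Fintype ι] [DecidableEq ι]
    (M : Matrix ι ι K) : Prop :=
  ∃ (α : K) (k l : ℕ) (e : (Fin k ⊕ Fin l) ≃ ι) (M₁ : Matrix (Fin l) (Fin l) K)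
    (P : (Matrix ι ι K)ˣ), 0 < l ∧ IsCyclicMat M₁ ∧
      M = (P : Matrix ι ι K) * (Matrix.reindex e e
        (Matrix.fromBlocks (α • (1 : Matrix (Fin k) (Fin k) K)) 0 0 M₁)) * ((P⁻¹ : (Matrix ι ι K)ˣ) : Matrix ι ι K)

/-!
The Kronecker product of the two diagonal matrices is the diagonal matrix of the products
`d₁ i * d₂ j`. A diagonal matrix has a squarefree minimal polynomial, so the cyclic block of an
almost cyclic diagonal matrix has a separable characteristic polynomial: all its eigenvalues but
`α` are simple, i.e. any two index pairs with the same product give the value `α`.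

Given such a collision `d₁ i * d₂ j = d₁ i' * d₂ j'`, non-scalarity forces `d₁ i ≠ d₁ i'`
(otherwise a whole row or column of collisions would take values other than `α`). Closure under
inversion then produces a second collision `d₁ i / d₂ j' = d₁ i' / d₂ j`, which must have the same
value; hence `d₂ j * d₂ j' = 1`, symmetrically `d₁ i * d₁ i' = 1`, and so `α² = 1`. A third pair
in the same fibre would have second coordinate inverse to `d₂ j` as well, a contradiction.
-/

open Finset

section Matrices

variable {K : Type*} [Field K] {ι : Type*} [DecidableEq ι]

theorem Matrix.exists_ne_of_diagonal_ne_smul_one {d : ι → K}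
    (h : ¬∃ c : K, diagonal d = c • (1 : Matrix ι ι K)) (a : K) : ∃ i, d i ≠ a := by
  by_contra! hd
  exact h ⟨a, by rw [smul_one_eq_diagonal]; exact congrArg diagonal (funext hd)⟩

variable [Fintype ι]

theorem Matrix.minpoly_units_conj (P : (Matrix ι ι K)ˣ) (B : Matrix ι ι K) :
    minpoly K ((P : Matrix ι ι K) * B * ((P⁻¹ : (Matrix ι ι K)ˣ) : Matrix ι ι K)) = minpoly K B :=
  minpoly.algEquiv_eq (MulSemiringAction.toAlgEquiv K _ (ConjAct.toConjAct P)) B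

theorem Matrix.aeval_diagonal (g : ι → K) (q : K[X]) :
    aeval (diagonal g) q = diagonal fun i => q.eval (g i) := by
  rw [← diagonalAlgHom_apply K, aeval_algHom_apply, aeval_pi_apply]
  simp

theorem Matrix.separable_minpoly_diagonal [DecidableEq K] (g : ι → K) :
    (minpoly K (diagonal g)).Separable := by
  refine (separable_prod_X_sub_C_iff' (s := univ.image g) (f := id).2 fun _ _ _ _ h => h).of_dvd
    (minpoly.dvd K _ ?_)
  rw [aeval_diagonal, ← diagonal_zero]
  congr 1 with i
  simp only [eval_prod, eval_sub, eval_X, eval_C]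
  exact prod_eq_zero (mem_image_of_mem g (mem_univ i)) (sub_self _)

theorem Matrix.aeval_fromBlocks_zero {m n : Type*} [Fintype m] [Fintype n] [DecidableEq m]
    [DecidableEq n] (A : Matrix m m K) (D : Matrix n n K) (q : K[X]) :
    aeval (fromBlocks A 0 0 D) q = fromBlocks (aeval A q) 0 0 (aeval D q) := by
  induction q using Polynomial.induction_on' with
  | add p q hp hq => simp [hp, hq, fromBlocks_add]
  | monomial k c =>
    have hpow : fromBlocks A 0 0 D ^ k = fromBlocks (A ^ k) 0 0 (D ^ k) := by
      induction k with
      | zero => simp [fromBlocks_one]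
      | succ k ih => simp [pow_succ, ih, fromBlocks_multiply]
    simp [aeval_monomial, hpow, Algebra.algebraMap_eq_smul_one, fromBlocks_smul]

theorem Matrix.minpoly_dvd_minpoly_fromBlocks_zero {m n : Type*} [Fintype m] [Fintype n]
    [DecidableEq m] [DecidableEq n] (A : Matrix m m K) (D : Matrix n n K) :
    minpoly K D ∣ minpoly K (fromBlocks A 0 0 D) := by
  refine minpoly.dvd K D ?_
  have h := congrArg toBlocks₂₂ (minpoly.aeval K (fromBlocks A 0 0 D))
  rwa [aeval_fromBlocks_zero, toBlocks_fromBlocks₂₂] at h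

theorem Matrix.card_filter_eq_count_roots_charpoly_diagonal [DecidableEq K] (g : ι → K) (x : K) :
    #{i | g i = x} = (diagonal g).charpoly.roots.count x := by
  rw [charpoly_diagonal, roots_prod _ _ (prod_ne_zero_iff.2 fun i _ => X_sub_C_ne_zero (g i))]
  simp [Multiset.count_map, eq_comm, card_def]

theorem Matrix.exists_eq_inv_of_diagonal_similar_inv {d : ι → K}
    (h : ∃ P : (Matrix ι ι K)ˣ, diagonal d =
      (P : Matrix ι ι K) * diagonal (fun i => (d i)⁻¹) * ((P⁻¹ : (Matrix ι ι K)ˣ) : Matrix ι ι K))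
    (i : ι) : ∃ j, d j = (d i)⁻¹ := by
  obtain ⟨P, hP⟩ := h
  have hchar : (diagonal d).charpoly = (diagonal fun i => (d i)⁻¹).charpoly := by
    rw [hP, coe_units_inv, charpoly_units_conj]
  have hroot := congrArg (eval (d i)⁻¹) hchar
  simp only [charpoly_diagonal, eval_prod, eval_sub, eval_X, eval_C] at hroot
  obtain ⟨j, -, hj⟩ := prod_eq_zero_iff.1 (hroot.trans (prod_eq_zero (mem_univ i) (sub_self _)))
  exact ⟨j, (sub_eq_zero.1 hj).symm⟩

theorem IsAlmostCyclicMat.exists_injOn_diagonal [DecidableEq K] {g : ι → K}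
    (h : IsAlmostCyclicMat (diagonal g)) : ∃ α, Set.InjOn g {i | g i ≠ α} := by
  obtain ⟨α, k, l, e, M₁, P, -, hcyc, hg⟩ := h
  have hchar : (diagonal g).charpoly = (X - C α) ^ k * M₁.charpoly := by
    rw [hg, coe_units_inv, charpoly_units_conj, charpoly_reindex, charpoly_fromBlocks_zero₂₁,
      smul_one_eq_diagonal, charpoly_diagonal, prod_const, card_univ, Fintype.card_fin]
  have hsep : M₁.charpoly.Separable := by
    refine hcyc ▸ (separable_minpoly_diagonal g).of_dvd ?_
    rw [hg, minpoly_units_conj, ← coe_reindexAlgEquiv K K, minpoly.algEquiv_eq]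
    exact minpoly_dvd_minpoly_fromBlocks_zero _ _
  refine ⟨α, fun i hi j _ hij => ?_⟩
  have hcard : #{j | g j = g i} ≤ 1 := by
    rw [card_filter_eq_count_roots_charpoly_diagonal, hchar,
      roots_mul (((monic_X_sub_C α).pow k).mul M₁.charpoly_monic).ne_zero, Multiset.count_add,
      roots_pow, roots_X_sub_C, Multiset.count_nsmul, Multiset.count_singleton, if_neg hi,
      mul_zero, zero_add]
    exact count_roots_le_one hsep _
  exact card_le_one.1 hcard i (by simp) j (by simp [hij])

end Matrices

theorem Set.InjOn.eq_of_apply_eq_of_ne {ι β : Type*} {g : ι → β} {α : β}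
    (h : Set.InjOn g {i | g i ≠ α}) {i j : ι} (hij : i ≠ j) (hg : g i = g j) : g i = α := by
  by_contra hi
  exact hij (h hi (show g j ≠ α from hg ▸ hi) hg)

section Collisions

variable {G : Type*} [CommGroupWithZero G] {ι κ : Type*} {d₁ : ι → G} {d₂ : κ → G} {α : G}

theorem injOn_mul_swap
    (h : Set.InjOn (fun p : ι × κ => d₁ p.1 * d₂ p.2) {p | d₁ p.1 * d₂ p.2 ≠ α}) :
    Set.InjOn (fun p : κ × ι => d₂ p.1 * d₁ p.2) {p | d₂ p.1 * d₁ p.2 ≠ α} := by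
  intro p hp q hq hpq
  exact Prod.swap_injective (h (x₁ := p.swap) (x₂ := q.swap) (by simpa [mul_comm] using hp)
    (by simpa [mul_comm] using hq) (by simpa [mul_comm] using hpq))

theorem fst_ne_of_mul_eq_mul (hd₁ : ∀ i, d₁ i ≠ 0) (hd₂ : ∀ j, d₂ j ≠ 0)
    (hne₁ : ∀ a, ∃ i, d₁ i ≠ a) (hne₂ : ∀ b, ∃ j, d₂ j ≠ b)
    (h : Set.InjOn (fun p : ι × κ => d₁ p.1 * d₂ p.2) {p | d₁ p.1 * d₂ p.2 ≠ α})
    {i i' : ι} {j j' : κ} (hne : (i, j) ≠ (i', j')) (heq : d₁ i * d₂ j = d₁ i' * d₂ j') :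
    d₁ i ≠ d₁ i' := by
  intro hi
  have hj : d₂ j = d₂ j' := mul_left_cancel₀ (hd₁ i) (hi ▸ heq)
  have hα : d₁ i * d₂ j = α := h.eq_of_apply_eq_of_ne hne heq
  rcases not_and_or.1 (mt Prod.ext_iff.2 hne) with hii | hjj
  · obtain ⟨j₀, hj₀⟩ := hne₂ (d₂ j)
    have : d₁ i * d₂ j₀ = α :=
      h.eq_of_apply_eq_of_ne (i := (i, j₀)) (j := (i', j₀)) (by simp [hii]) (by simp [hi])
    exact hj₀ (mul_left_cancel₀ (hd₁ i) (this.trans hα.symm))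
  · obtain ⟨i₀, hi₀⟩ := hne₁ (d₁ i)
    have : d₁ i₀ * d₂ j = α :=
      h.eq_of_apply_eq_of_ne (i := (i₀, j)) (j := (i₀, j')) (by simp [hjj]) (by simp [hj])
    exact hi₀ (mul_right_cancel₀ (hd₂ j) (this.trans hα.symm))

theorem snd_mul_snd_eq_one_of_mul_eq_mul (hd₁ : ∀ i, d₁ i ≠ 0) (hd₂ : ∀ j, d₂ j ≠ 0)
    (hne₁ : ∀ a, ∃ i, d₁ i ≠ a) (hne₂ : ∀ b, ∃ j, d₂ j ≠ b)
    (hinv₂ : ∀ j, ∃ j', d₂ j' = (d₂ j)⁻¹)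
    (h : Set.InjOn (fun p : ι × κ => d₁ p.1 * d₂ p.2) {p | d₁ p.1 * d₂ p.2 ≠ α})
    {i i' : ι} {j j' : κ} (hne : (i, j) ≠ (i', j')) (heq : d₁ i * d₂ j = d₁ i' * d₂ j') :
    d₂ j * d₂ j' = 1 := by
  have hi := fst_ne_of_mul_eq_mul hd₁ hd₂ hne₁ hne₂ h hne heq
  obtain ⟨k, hk⟩ := hinv₂ j
  obtain ⟨k', hk'⟩ := hinv₂ j'
  have hswap : d₁ i * d₂ k' = d₁ i' * d₂ k := by
    rw [hk, hk', ← div_eq_mul_inv, ← div_eq_mul_inv, div_eq_div_iff (hd₂ j') (hd₂ j), heq]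
  have h₁ := h.eq_of_apply_eq_of_ne (i := (i, k')) (j := (i', k))
    (fun hp => hi (congrArg (d₁ ∘ Prod.fst) hp)) hswap
  have h₂ := h.eq_of_apply_eq_of_ne hne heq
  have : d₂ k' = d₂ j := mul_left_cancel₀ (hd₁ i) (h₁.trans h₂.symm)
  rw [← this, hk', inv_mul_cancel₀ (hd₂ j')]

variable [Fintype ι] [Fintype κ] [DecidableEq G]

theorem card_filter_mul_eq_le_two (hd₁ : ∀ i, d₁ i ≠ 0) (hd₂ : ∀ j, d₂ j ≠ 0)
    (hne₁ : ∀ a, ∃ i, d₁ i ≠ a) (hne₂ : ∀ b, ∃ j, d₂ j ≠ b)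
    (hinv₂ : ∀ j, ∃ j', d₂ j' = (d₂ j)⁻¹)
    (h : Set.InjOn (fun p : ι × κ => d₁ p.1 * d₂ p.2) {p | d₁ p.1 * d₂ p.2 ≠ α}) (x : G) :
    #{p : ι × κ | d₁ p.1 * d₂ p.2 = x} ≤ 2 := by
  by_contra! hlt
  obtain ⟨p, hp, q, hq, r, hr, hpq, hpr, hqr⟩ := two_lt_card.1 hlt
  simp only [mem_filter, mem_univ, true_and] at hp hq hr
  have hpq₂ := snd_mul_snd_eq_one_of_mul_eq_mul hd₁ hd₂ hne₁ hne₂ hinv₂ h hpq (hp.trans hq.symm)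
  have hpr₂ := snd_mul_snd_eq_one_of_mul_eq_mul hd₁ hd₂ hne₁ hne₂ hinv₂ h hpr (hp.trans hr.symm)
  have hqr₂ : d₂ q.2 = d₂ r.2 := mul_left_cancel₀ (hd₂ p.2) (hpq₂.trans hpr₂.symm)
  exact fst_ne_of_mul_eq_mul hd₁ hd₂ hne₁ hne₂ h hqr (hq.trans hr.symm)
    (mul_right_cancel₀ (hd₂ q.2) (by rw [hq, hqr₂, hr]))

theorem mul_self_eq_one_of_one_lt_card_filter_mul_eq (hd₁ : ∀ i, d₁ i ≠ 0) (hd₂ : ∀ j, d₂ j ≠ 0)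
    (hne₁ : ∀ a, ∃ i, d₁ i ≠ a) (hne₂ : ∀ b, ∃ j, d₂ j ≠ b)
    (hinv₁ : ∀ i, ∃ i', d₁ i' = (d₁ i)⁻¹) (hinv₂ : ∀ j, ∃ j', d₂ j' = (d₂ j)⁻¹)
    (h : Set.InjOn (fun p : ι × κ => d₁ p.1 * d₂ p.2) {p | d₁ p.1 * d₂ p.2 ≠ α}) {x : G}
    (hx : 1 < #{p : ι × κ | d₁ p.1 * d₂ p.2 = x}) : x * x = 1 := by
  obtain ⟨p, hp, q, hq, hpq⟩ := one_lt_card.1 hx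
  simp only [mem_filter, mem_univ, true_and] at hp hq
  have h₂ := snd_mul_snd_eq_one_of_mul_eq_mul hd₁ hd₂ hne₁ hne₂ hinv₂ h hpq (hp.trans hq.symm)
  have h₁ := snd_mul_snd_eq_one_of_mul_eq_mul hd₂ hd₁ hne₂ hne₁ hinv₁ (injOn_mul_swap h)
    (Prod.swap_injective.ne hpq) (by simpa [mul_comm] using hp.trans hq.symm)
  calc x * x = d₁ p.1 * d₂ p.2 * (d₁ q.1 * d₂ q.2) := by rw [hp, hq]
    _ = d₁ p.1 * d₁ q.1 * (d₂ p.2 * d₂ q.2) := mul_mul_mul_comm _ _ _ _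
    _ = 1 := by rw [h₁, h₂, one_mul]

end Collisions

/-- If `M₁, M₂` are diagonal non-scalar matrices, each similar to its inverse, and
`M = M₁ ⊗ M₂` is almost cyclic, then every eigenvalue multiplicity of `M` is at most `2`,
and any eigenvalue of multiplicity `2` equals `1` or `-1`. -/
theorem stmt5 {K : Type*} [Field K] [DecidableEq K] (m n : ℕ)
    (d₁ : Fin m → K) (d₂ : Fin n → K)
    (hd₁ : ∀ i, d₁ i ≠ 0) (hd₂ : ∀ j, d₂ j ≠ 0)
    (hns₁ : ¬∃ c : K, Matrix.diagonal d₁ = c • (1 : Matrix (Fin m) (Fin m) K))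
    (hns₂ : ¬∃ c : K, Matrix.diagonal d₂ = c • (1 : Matrix (Fin n) (Fin n) K))
    (hinv₁ : ∃ P : (Matrix (Fin m) (Fin m) K)ˣ,
      Matrix.diagonal d₁ = (P : Matrix (Fin m) (Fin m) K) *
        Matrix.diagonal (fun i => (d₁ i)⁻¹) * ((P⁻¹ : (Matrix (Fin m) (Fin m) K)ˣ) : Matrix (Fin m) (Fin m) K))
    (hinv₂ : ∃ Q : (Matrix (Fin n) (Fin n) K)ˣ,
      Matrix.diagonal d₂ = (Q : Matrix (Fin n) (Fin n) K) *
        Matrix.diagonal (fun j => (d₂ j)⁻¹) * ((Q⁻¹ : (Matrix (Fin n) (Fin n) K)ˣ) : Matrix (Fin n) (Fin n) K))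
    (hac : IsAlmostCyclicMat (Matrix.kronecker (Matrix.diagonal d₁) (Matrix.diagonal d₂))) :
    (∀ lam : K,
      (Finset.univ.filter fun pr : Fin m × Fin n => d₁ pr.1 * d₂ pr.2 = lam).card ≤ 2) ∧
    (∀ e : K,
      (Finset.univ.filter fun pr : Fin m × Fin n => d₁ pr.1 * d₂ pr.2 = e).card = 2 →
        e = 1 ∨ e = -1) := by
  rw [kronecker, diagonal_kronecker_diagonal] at hac
  obtain ⟨α, hα⟩ := hac.exists_injOn_diagonal
  have hne₁ := exists_ne_of_diagonal_ne_smul_one hns₁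
  have hne₂ := exists_ne_of_diagonal_ne_smul_one hns₂
  have hcl₁ := exists_eq_inv_of_diagonal_similar_inv hinv₁
  have hcl₂ := exists_eq_inv_of_diagonal_similar_inv hinv₂
  refine ⟨card_filter_mul_eq_le_two hd₁ hd₂ hne₁ hne₂ hcl₂ hα, fun e he => ?_⟩
  exact mul_self_eq_one_iff.1 <|
    mul_self_eq_one_of_one_lt_card_filter_mul_eq hd₁ hd₂ hne₁ hne₂ hcl₁ hcl₂ hα (by omega)
end

section
/- If an almost cyclic matrix M acts on a finite-dimensional vector space W and U is an M-stable subspace of W, then the restriction of M to U and the induced map of M on W/U are both almost cyclic. -/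
open Polynomial

/-- An endomorphism `f` of a finite-dimensional space is almost cyclic if for some scalar `α`
the quotient of its characteristic polynomial by its minimal polynomial is a power of
`(X - α)`. -/
def IsAlmostCyclicEnd {F V : Type*} [Field F] [AddCommGroup V] [Module F V]
    [FiniteDimensional F V] (f : Module.End F V) : Prop :=
  ∃ (α : F) (j : ℕ), LinearMap.charpoly f = (X - C α) ^ j * minpoly F f

/-!
For a scalar `α`, `charpoly f = (X - α) ^ j * minpoly f` holds for some `j` exactly when some
power of `f - α` maps the whole space into a cyclic subspace `F[f] v`. Indeed, the characteristic polynomial of `f` is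
that of `f` on `F[f] v`, which is the minimal polynomial of `f` there, times that of the induced
map on the quotient, which is a power of `X - α`; for the converse take `v` whose annihilator is
generated by the minimal polynomial of `f`. The condition passes to an invariant subspace `U`,
since `F[f] v ∩ U` is again cyclic (`F[X]` is a principal ideal domain), and to the quotient by
`U`, where the image of `F[f] v` is cyclic.
-/

section InvariantSubmodule

variable {R M : Type*} [CommRing R] [AddCommGroup M] [Module R M]

theorem LinearMap.aeval_restrict_apply (f : Module.End R M) {p : Submodule R M}
    (hp : ∀ x ∈ p, f x ∈ p) (q : R[X]) (x : p) :
    (aeval (f.restrict hp) q x : M) = aeval f q x := by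
  induction q using Polynomial.induction_on' with
  | add q r hq hr => simp [hq, hr]
  | monomial n a => simp [aeval_monomial, Module.End.pow_restrict n hp]

theorem Module.End.aeval_apply_mem (f : Module.End R M) {p : Submodule R M}
    (hp : ∀ x ∈ p, f x ∈ p) (q : R[X]) {x : M} (hx : x ∈ p) : aeval f q x ∈ p := by
  rw [← LinearMap.aeval_restrict_apply f hp q ⟨x, hx⟩]
  exact Submodule.coe_mem _

theorem Submodule.aeval_mapQ_mk (f : Module.End R M) {p : Submodule R M} (hp : p ≤ p.comap f)
    (q : R[X]) (x : M) :
    aeval (p.mapQ p f hp) q (Quotient.mk x) = Quotient.mk (aeval f q x) := by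
  induction q using Polynomial.induction_on' with
  | add q r hq hr => simp [hq, hr]
  | monomial n a => simp [aeval_monomial, ← p.mapQ_pow hp n]

open Module.Basis in
theorem LinearMap.charpoly_eq_charpoly_restrict_mul_charpoly_mapQ [Module.Free R M]
    [Module.Finite R M] (p : Submodule R M) [Module.Free R p] [Module.Finite R p]
    [Module.Free R (M ⧸ p)] (f : Module.End R M) (hf : p ≤ p.comap f) :
    f.charpoly = (f.restrict hf).charpoly * (p.mapQ p f hf).charpoly := by
  let bp := Module.Free.chooseBasis R p
  let bq := Module.Free.chooseBasis R (M ⧸ p)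
  let b := sumQuot bp bq
  let B := Matrix.of fun i l ↦ (b.repr (f (b (Sum.inr l)))) (Sum.inl i)
  suffices LinearMap.toMatrix b b f =
      Matrix.fromBlocks (LinearMap.toMatrix bp bp (f.restrict hf)) B 0
        (LinearMap.toMatrix bq bq (p.mapQ p f hf)) by
    rw [← LinearMap.charpoly_toMatrix f b, this, Matrix.charpoly_fromBlocks_zero₂₁,
      LinearMap.charpoly_toMatrix, LinearMap.charpoly_toMatrix]
  ext (i | j) (k | l)
  · simp only [b, sumQuot_inl, Matrix.fromBlocks_apply₁₁, LinearMap.toMatrix_apply]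
    apply sumQuot_repr_inl_of_mem
  · simp [b, LinearMap.toMatrix_apply, Matrix.fromBlocks_apply₁₂, B]
  · suffices p.mkQ (f (bp k)) = 0 by simp [LinearMap.toMatrix_apply, b, this]
    rw [← LinearMap.mem_ker, Submodule.ker_mkQ]
    exact hf (bp k).2
  · simp only [LinearMap.toMatrix_apply, sumQuot_repr_inr, Matrix.fromBlocks_apply₂₂, b]
    rw [← sumQuot_inr bp bq l, p.mapQ_apply]
    simp

end InvariantSubmodule

theorem LinearMap.charpoly_eq_X_sub_C_pow_of_aeval_eq_zero {R M : Type*} [CommRing R]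
    [IsDomain R] [AddCommGroup M] [Module R M] [Module.Finite R M] [Module.Free R M]
    {f : Module.End R M} {α : R} {k : ℕ} (h : aeval f ((X - C α) ^ k) = 0) :
    f.charpoly = (X - C α) ^ Module.finrank R M := by
  have hnil : IsNilpotent (f - α • 1) := ⟨k, by simpa [Algebra.algebraMap_eq_smul_one] using h⟩
  have := f.charpoly_sub_smul α
  rw [hnil.charpoly_eq_X_pow_finrank] at this
  have := congrArg (fun q => q.comp (X - C α)) this
  simpa [Polynomial.comp_assoc] using this.symm

namespace Module.End

variable {F V : Type*} [Field F] [AddCommGroup V] [Module F V]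

noncomputable def cyclicSubspace (f : Module.End F V) (v : V) : Submodule F V :=
  LinearMap.range (LinearMap.applyₗ v ∘ₗ (aeval f).toLinearMap)

variable {f : Module.End F V} {v w : V}

theorem self_mem_cyclicSubspace : v ∈ f.cyclicSubspace v := ⟨1, by simp⟩

theorem apply_mem_cyclicSubspace (f : Module.End F V) (v : V) :
    ∀ w ∈ f.cyclicSubspace v, f w ∈ f.cyclicSubspace v := by
  rintro _ ⟨q, rfl⟩
  exact ⟨X * q, by simp [mul_apply]⟩

theorem exists_cyclicSubspace_eq_of_le {p : Submodule F V} (hp : ∀ x ∈ p, f x ∈ p)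
    (hle : p ≤ f.cyclicSubspace v) : ∃ v' ∈ p, f.cyclicSubspace v' = p := by
  let I : Ideal F[X] :=
    { carrier := {q | aeval f q v ∈ p}
      add_mem' := fun hq hr => by simpa using p.add_mem hq hr
      zero_mem' := by simp
      smul_mem' := fun r q hq => by simpa [mul_apply] using f.aeval_apply_mem hp r hq }
  obtain ⟨g, hg⟩ := IsPrincipalIdealRing.principal I
  have hgI : g ∈ I := hg ▸ Ideal.mem_span_singleton_self g
  refine ⟨aeval f g v, hgI, le_antisymm ?_ fun w hw => ?_⟩
  · rintro _ ⟨q, rfl⟩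
    have : aeval f (q * g) v ∈ p := I.mul_mem_left q hgI
    simpa [mul_apply] using this
  · obtain ⟨q, rfl⟩ := hle hw
    have hqI : q ∈ I := hw
    rw [hg, Ideal.submodule_span_eq, Ideal.mem_span_singleton'] at hqI
    obtain ⟨r, rfl⟩ := hqI
    exact ⟨r, by simp [mul_apply]⟩

theorem aeval_minpoly_restrict_apply_eq_zero {p : Submodule F V} (hp : ∀ x ∈ p, f x ∈ p)
    (hw : w ∈ p) : aeval f (minpoly F (f.restrict hp)) w = 0 := by
  have := congrArg Subtype.val (LinearMap.congr_fun (minpoly.aeval F (f.restrict hp)) ⟨w, hw⟩)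
  rwa [LinearMap.aeval_restrict_apply] at this

theorem minpoly_restrict_dvd {p : Submodule F V} (hp : ∀ x ∈ p, f x ∈ p) :
    minpoly F (f.restrict hp) ∣ minpoly F f :=
  minpoly.dvd F _ <| LinearMap.ext fun x => Subtype.ext <| by
    simp [LinearMap.aeval_restrict_apply]

theorem exists_aeval_restrict_mem_cyclicSubspace {p : Submodule F V} (hp : ∀ x ∈ p, f x ∈ p)
    {g : F[X]} (h : ∀ w, aeval f g w ∈ f.cyclicSubspace v) :
    ∃ v' : p, ∀ w, aeval (f.restrict hp) g w ∈ cyclicSubspace (f.restrict hp) v' := by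
  have hN : ∀ x ∈ f.cyclicSubspace v ⊓ p, f x ∈ f.cyclicSubspace v ⊓ p :=
    fun x hx => ⟨f.apply_mem_cyclicSubspace v _ hx.1, hp x hx.2⟩
  obtain ⟨v', hv', hZ⟩ := exists_cyclicSubspace_eq_of_le hN inf_le_left
  refine ⟨⟨v', hv'.2⟩, fun w => ?_⟩
  obtain ⟨r, hr⟩ : aeval f g w ∈ f.cyclicSubspace v' :=
    hZ ▸ ⟨h w, f.aeval_apply_mem hp g w.2⟩
  exact ⟨r, Subtype.ext (by simpa [LinearMap.aeval_restrict_apply] using hr)⟩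

theorem aeval_mapQ_mem_cyclicSubspace {p : Submodule F V} (hp : p ≤ p.comap f)
    {g : F[X]} (h : ∀ w, aeval f g w ∈ f.cyclicSubspace v) (y : V ⧸ p) :
    aeval (p.mapQ p f hp) g y ∈ cyclicSubspace (p.mapQ p f hp) (Submodule.Quotient.mk v) := by
  obtain ⟨w, rfl⟩ := Submodule.Quotient.mk_surjective _ y
  obtain ⟨r, hr⟩ := h w
  exact ⟨r, by simp [Submodule.aeval_mapQ_mk, ← hr]⟩

variable [FiniteDimensional F V]

theorem charpoly_restrict_cyclicSubspace (f : Module.End F V) (v : V) :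
    (f.restrict (f.apply_mem_cyclicSubspace v)).charpoly =
      minpoly F (f.restrict (f.apply_mem_cyclicSubspace v)) := by
  set g := f.restrict (f.apply_mem_cyclicSubspace v)
  set m := minpoly F g
  have hm : m.Monic := minpoly.monic g.isIntegral
  have hmv : aeval f m v = 0 := aeval_minpoly_restrict_apply_eq_zero _ self_mem_cyclicSubspace
  have hdim : Module.finrank F (f.cyclicSubspace v) ≤ m.natDegree := by
    -- `aeval f q v = aeval f (q %ₘ m) v`, so polynomials of degree `< deg m` suffice
    have : f.cyclicSubspace v =
        LinearMap.range ((LinearMap.applyₗ v ∘ₗ (aeval f).toLinearMap) ∘ₗ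
          (degreeLT F m.natDegree).subtype) := by
      refine le_antisymm (fun w ⟨q, hq⟩ => ⟨⟨q %ₘ m, ?_⟩, ?_⟩) (LinearMap.range_comp_le_range _ _)
      · rw [mem_degreeLT, ← degree_eq_natDegree hm.ne_zero]
        exact degree_modByMonic_lt q hm
      · rw [← hq]
        conv_rhs => rw [← modByMonic_add_div q m]
        simp [mul_comm m, mul_apply, hmv]
    rw [this]
    refine (LinearMap.finrank_range_le _).trans ?_
    simp [(degreeLTEquiv F m.natDegree).finrank_eq]
  exact eq_of_monic_of_dvd_of_natDegree_le hm g.charpoly_monic (LinearMap.minpoly_dvd_charpoly g)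
    (g.charpoly_natDegree.trans_le hdim)

theorem exists_minpoly_dvd_of_aeval_apply_eq_zero (f : Module.End F V) :
    ∃ v : V, ∀ q : F[X], aeval f q v = 0 → minpoly F f ∣ q := by
  obtain ⟨x, hx⟩ := Module.exists_ker_toSpanSingleton_eq_annihilator F[X] (AEval' f)
  refine ⟨(AEval'.of f).symm x, fun q hq => ?_⟩
  have : q ∈ Module.annihilator F[X] (AEval' f) := by
    rw [← hx, LinearMap.mem_ker, LinearMap.toSpanSingleton_apply,
      ← (AEval'.of f).symm.map_eq_zero_iff]
    simpa using hq
  rwa [← span_minpoly_eq_annihilator, Ideal.mem_span_singleton] at this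

theorem charpoly_eq_minpoly_restrict_mul_charpoly_mapQ (f : Module.End F V) (v : V) :
    f.charpoly = minpoly F (f.restrict (f.apply_mem_cyclicSubspace v)) *
      ((f.cyclicSubspace v).mapQ (f.cyclicSubspace v) f
        (f.apply_mem_cyclicSubspace v)).charpoly := by
  rw [LinearMap.charpoly_eq_charpoly_restrict_mul_charpoly_mapQ (f.cyclicSubspace v) f,
    charpoly_restrict_cyclicSubspace]

theorem _root_.IsAlmostCyclicEnd.exists_aeval_mem_cyclicSubspace (hf : IsAlmostCyclicEnd f) :
    ∃ (α : F) (k : ℕ) (v : V), ∀ w, aeval f ((X - C α) ^ k) w ∈ f.cyclicSubspace v := by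
  obtain ⟨α, j, hf⟩ := hf
  obtain ⟨v, hv⟩ := exists_minpoly_dvd_of_aeval_apply_eq_zero f
  have hZ := f.apply_mem_cyclicSubspace v
  have hmin : minpoly F (f.restrict hZ) = minpoly F f :=
    eq_of_monic_of_associated (minpoly.monic (LinearMap.isIntegral _))
      (minpoly.monic (LinearMap.isIntegral f)) <| associated_of_dvd_dvd (minpoly_restrict_dvd hZ)
        (hv _ (aeval_minpoly_restrict_apply_eq_zero hZ self_mem_cyclicSubspace))
  have hq : ((f.cyclicSubspace v).mapQ (f.cyclicSubspace v) f hZ).charpoly = (X - C α) ^ j := by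
    refine mul_left_cancel₀ (minpoly.ne_zero (LinearMap.isIntegral f)) ?_
    rw [← hmin, ← charpoly_eq_minpoly_restrict_mul_charpoly_mapQ, hmin, hf, mul_comm]
  refine ⟨α, j, v, fun w => ?_⟩
  have := LinearMap.congr_fun
    ((f.cyclicSubspace v).mapQ (f.cyclicSubspace v) f hZ).aeval_self_charpoly
    (Submodule.Quotient.mk w)
  rwa [hq, Submodule.aeval_mapQ_mk, LinearMap.zero_apply, Submodule.Quotient.mk_eq_zero] at this

theorem isAlmostCyclicEnd_of_aeval_mem_cyclicSubspace {α : F} {k : ℕ}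
    (h : ∀ w, aeval f ((X - C α) ^ k) w ∈ f.cyclicSubspace v) : IsAlmostCyclicEnd f := by
  have hZ := f.apply_mem_cyclicSubspace v
  have hq : aeval ((f.cyclicSubspace v).mapQ (f.cyclicSubspace v) f hZ) ((X - C α) ^ k) = 0 := by
    refine LinearMap.ext fun y => ?_
    obtain ⟨w, rfl⟩ := Submodule.Quotient.mk_surjective _ y
    rw [Submodule.aeval_mapQ_mk, LinearMap.zero_apply, Submodule.Quotient.mk_eq_zero]
    exact h w
  have hf := charpoly_eq_minpoly_restrict_mul_charpoly_mapQ f v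
  rw [LinearMap.charpoly_eq_X_sub_C_pow_of_aeval_eq_zero hq] at hf
  obtain ⟨s, hs⟩ := minpoly_restrict_dvd hZ
  have hmonic := minpoly.monic (LinearMap.isIntegral (f.restrict hZ))
  have hs_dvd : s ∣ (X - C α) ^ finrank F (V ⧸ f.cyclicSubspace v) := by
    have := LinearMap.minpoly_dvd_charpoly f
    rwa [hf, hs, mul_dvd_mul_iff_left hmonic.ne_zero] at this
  obtain ⟨i, hi, hassoc⟩ := (dvd_prime_pow (prime_X_sub_C α) _).mp hs_dvd
  have hs_eq : s = (X - C α) ^ i := eq_of_monic_of_associated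
    (hmonic.of_mul_monic_left (hs ▸ minpoly.monic (LinearMap.isIntegral f)))
    ((monic_X_sub_C α).pow i) hassoc
  refine ⟨α, finrank F (V ⧸ f.cyclicSubspace v) - i, ?_⟩
  rw [hf, hs, hs_eq, mul_left_comm, ← pow_add, Nat.sub_add_cancel hi]

end Module.End

open Module.End in
/-- If an almost cyclic endomorphism `M` of `W` stabilizes a subspace `U`, then the restriction
of `M` to `U` and the induced endomorphism of `W / U` are both almost cyclic. -/
theorem stmt6 {F W : Type*} [Field F] [AddCommGroup W] [Module F W] [FiniteDimensional F W]
    (M : Module.End F W) (U : Submodule F W) (hU : ∀ x ∈ U, M x ∈ U)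
    (hM : IsAlmostCyclicEnd M) :
    IsAlmostCyclicEnd (M.restrict hU) ∧
    IsAlmostCyclicEnd (Submodule.mapQ U U M (fun x hx => hU x hx)) := by
  obtain ⟨α, k, v, h⟩ := hM.exists_aeval_mem_cyclicSubspace
  obtain ⟨v', h'⟩ := exists_aeval_restrict_mem_cyclicSubspace hU h
  exact ⟨isAlmostCyclicEnd_of_aeval_mem_cyclicSubspace h',
    isAlmostCyclicEnd_of_aeval_mem_cyclicSubspace (aeval_mapQ_mem_cyclicSubspace _ h)⟩
end

section
/- For every odd integer n ≥ 3, the alternating group A_n is generated by two n-cycles. -/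
/-!
Let `g` be an `n`-cycle and `h = t g t⁻¹` with `t` the transposition `(x, g x)`. Conjugation by `t`
swaps `g` and `h`, and `g, t` generate `S_n`, so `K = ⟨g, h⟩` is normal in `S_n`. It contains the
3-cycle `h g⁻¹ = (g x, x)(g x, g² x)`, and all 3-cycles are conjugate in `S_n`, so `A_n ≤ K`.
For odd `n` both `g` and `h` are even, hence `K = A_n`.
-/

open Equiv Equiv.Perm Subgroup Finset

namespace Subgroup

variable {G : Type*} [Group G]

theorem mem_normalizer_closure_pair_of_conj {g h t : G} (hg : t * g * t⁻¹ = h)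
    (hh : t * h * t⁻¹ = g) : t ∈ normalizer (closure {g, h} : Set G) := by
  refine normalizer_le_normalizer_closure _ (mem_normalizer_iff_conj_image_eq.2 ?_)
  rw [Set.image_pair, MulAut.conj_apply, MulAut.conj_apply, hg, hh, Set.pair_comm]

end Subgroup

namespace Equiv.Perm

variable {α : Type*} [DecidableEq α] [Fintype α]

theorem isThreeCycle_swap_conj_mul_inv {g : Perm α} {x : α} (h1 : g x ≠ x)
    (h2 : g (g x) ≠ x) : IsThreeCycle (swap x (g x) * g * (swap x (g x))⁻¹ * g⁻¹) := by
  have : swap x (g x) * g * (swap x (g x))⁻¹ * g⁻¹ = swap (g x) x * swap (g x) (g (g x)) := by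
    rw [swap_apply_apply, swap_comm (g x) x, swap_inv]
    group
  rw [this]
  exact isThreeCycle_swap_mul_swap_same h1 (g.injective.ne h1).symm h2.symm

theorem IsCycle.apply_apply_ne_self {g : Perm α} (hg : g.IsCycle) (h3 : 3 ≤ #g.support)
    {x : α} (hx : g x ≠ x) : g (g x) ≠ x := by
  intro hxx
  have hsq : g ^ 2 = 1 := (hg.pow_eq_one_iff' hx).2 (by rwa [sq])
  have := Nat.le_of_dvd two_pos (orderOf_dvd_of_pow_eq_one hsq)
  rw [hg.orderOf] at this
  omega

theorem alternatingGroup_le_of_isThreeCycle_mem {K : Subgroup (Perm α)} [K.Normal] {c : Perm α}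
    (hc : IsThreeCycle c) (hcK : c ∈ K) : alternatingGroup α ≤ K := by
  rw [← closure_three_cycles_eq_alternating, closure_le]
  intro σ hσ
  obtain ⟨τ, rfl⟩ := isConj_iff.1 (isConj_iff_cycleType_eq.2 (hc.trans hσ.symm))
  exact Normal.conj_mem ‹_› c hcK τ

theorem alternatingGroup_le_closure_swap_conj {g : Perm α} (hg : g.IsCycle)
    (hgs : g.support = univ) (h3 : 3 ≤ Fintype.card α) (x : α) :
    alternatingGroup α ≤ closure {g, swap x (g x) * g * (swap x (g x))⁻¹} := by
  set t := swap x (g x)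
  set K := closure {g, t * g * t⁻¹}
  have hgK : g ∈ K := subset_closure (by simp)
  have hhK : t * g * t⁻¹ ∈ K := subset_closure (by simp)
  have htN : t ∈ normalizer (K : Set (Perm α)) :=
    Subgroup.mem_normalizer_closure_pair_of_conj rfl (by simp [t, mul_assoc])
  have : K.Normal := by
    rw [← normalizer_eq_top_iff, eq_top_iff, ← closure_cycle_adjacent_swap hg hgs x, closure_le]
    rintro y (rfl | rfl)
    exacts [le_normalizer hgK, htN]
  have hx : g x ≠ x := by rw [← mem_support, hgs]; exact mem_univ x
  refine alternatingGroup_le_of_isThreeCycle_mem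
    (isThreeCycle_swap_conj_mul_inv hx ?_) (mul_mem hhK (inv_mem hgK))
  exact hg.apply_apply_ne_self (by rwa [hgs, card_univ]) hx

end Equiv.Perm

/-- For every odd `n ≥ 3`, the alternating group `A_n` is generated by two `n`-cycles. -/
theorem stmt7 (n : ℕ) (hn : Odd n) (h3 : 3 ≤ n) :
    ∃ g h : Equiv.Perm (Fin n),
      g.IsCycle ∧ g.support = Finset.univ ∧
      h.IsCycle ∧ h.support = Finset.univ ∧
      Subgroup.closure {g, h} = alternatingGroup (Fin n) := by
  obtain ⟨k, rfl⟩ := hn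
  set g := finRotate (2 * k + 1)
  set t := swap 0 (g 0)
  have hg : g.IsCycle := isCycle_finRotate_of_le (by omega)
  have hgs : g.support = univ := support_finRotate_of_le (by omega)
  have hgA : g ∈ alternatingGroup _ := finRotate_bit1_mem_alternatingGroup
  refine ⟨g, t * g * t⁻¹, hg, hgs, hg.conj, by rw [support_conj, hgs, map_univ_equiv], ?_⟩
  refine le_antisymm ?_ (alternatingGroup_le_closure_swap_conj hg hgs (by simpa using h3) 0)
  rw [closure_le]
  rintro y (rfl | rfl)
  exacts [hgA, alternatingGroup.normal.conj_mem g hgA t]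
end

section
/- For every even integer n > 6, the symmetric group S_n is generated by two n-cycles. -/
/-!
Let `ρ : i ↦ i + 1` be the rotation of `Fin n` and `τ = (0 1)`. For even `n` the permutation
`f = ρ τ ρ` is again an `n`-cycle: it sends `x ↦ x + 2` except `0 ↦ 1` and `-1 ↦ 2`, so it runs
through the odd residues `1, 3, …, -1` and then through the even ones `2, 4, …, 0`.
Since `τ = ρ⁻¹ f ρ⁻¹`, the group `⟨ρ, f⟩` contains the `n`-cycle `ρ` together with the adjacent
transposition `(0 ρ(0))`, and these generate `S_n`.
-/

open Equiv Equiv.Perm Subgroup Finset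

namespace Equiv.Perm

variable {α : Type*} [DecidableEq α] [Fintype α]

theorem closure_cycle_mul_swap_mul_cycle {σ : Perm α} (hσ : σ.IsCycle) (hσ' : σ.support = univ)
    (x : α) : closure {σ, σ * swap x (σ x) * σ} = ⊤ := by
  set H := closure {σ, σ * swap x (σ x) * σ}
  have hσH : σ ∈ H := subset_closure (Set.mem_insert _ _)
  have hτH : σ * swap x (σ x) * σ ∈ H := subset_closure (Set.mem_insert_of_mem _ rfl)
  have hswap : swap x (σ x) = σ⁻¹ * (σ * swap x (σ x) * σ) * σ⁻¹ := by group
  rw [eq_top_iff, ← closure_cycle_adjacent_swap hσ hσ' x, closure_le, Set.insert_subset_iff,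
    Set.singleton_subset_iff, hswap]
  exact ⟨hσH, mul_mem (mul_mem (inv_mem hσH) hτH) (inv_mem hσH)⟩

theorem isCycle_and_support_eq_univ_of_forall_sameCycle [Nontrivial α] {f : Perm α} {x : α}
    (h : ∀ y, f.SameCycle x y) : f.IsCycle ∧ f.support = univ := by
  have hmoved : ∀ y, f y ≠ y := fun y hy => by
    obtain ⟨z, hz⟩ := exists_ne y
    exact hz (((h y).symm.trans (h z)).eq_of_left hy).symm
  exact ⟨⟨x, hmoved x, fun y _ => h y⟩, eq_univ_of_forall fun y => mem_support.2 (hmoved y)⟩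

end Equiv.Perm

namespace Fin

open Fin.CommRing

variable {n : ℕ} [NeZero n]

theorem natCast_ne_zero_of_pos_of_lt {a : ℕ} (ha : 0 < a) (han : a < n) : (a : Fin n) ≠ 0 := by
  rw [Ne, natCast_eq_zero]
  exact fun hdvd => (Nat.le_of_dvd ha hdvd).not_gt han

theorem sameCycle_natCast_add_two_mul {f : Perm (Fin n)}
    (hf : ∀ x : Fin n, x ≠ 0 → x ≠ -1 → f x = x + 2) {a k : ℕ} (ha : 0 < a) (hk : a + 2 * k < n) :
    f.SameCycle (a : Fin n) ((a + 2 * k : ℕ) : Fin n) := by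
  induction k with
  | zero => exact .refl _ _
  | succ k ih =>
    have hne_zero := natCast_ne_zero_of_pos_of_lt (n := n) (a := a + 2 * k) (by omega) (by omega)
    have hne_neg_one : ((a + 2 * k : ℕ) : Fin n) ≠ -1 := fun h => by
      refine natCast_ne_zero_of_pos_of_lt (n := n) (a := a + 2 * k + 1) (by omega) (by omega) ?_
      push_cast at h ⊢
      linear_combination h
    have hstep : f (a + 2 * k : ℕ) = ((a + 2 * (k + 1) : ℕ) : Fin n) := by
      rw [hf _ hne_zero hne_neg_one]
      push_cast
      ring
    rw [← hstep]
    exact (ih (by omega)).trans (sameCycle_apply_right.2 (.refl _ _))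

theorem finRotate_mul_swap_mul_finRotate_apply_of_ne {x : Fin n} (h0 : x ≠ 0) (h1 : x ≠ -1) :
    (finRotate n * swap 0 1 * finRotate n : Perm (Fin n)) x = x + 2 := by
  have hx0 : x + 1 ≠ 0 := fun h => h1 (by linear_combination h)
  have hx1 : x + 1 ≠ 1 := fun h => h0 (by linear_combination h)
  rw [Perm.mul_apply, Perm.mul_apply, finRotate_apply, finRotate_apply,
    swap_apply_of_ne_of_ne hx0 hx1]
  ring

theorem finRotate_mul_swap_mul_finRotate_apply_zero :
    (finRotate n * swap 0 1 * finRotate n : Perm (Fin n)) 0 = 1 := by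
  simp [finRotate_apply]

theorem finRotate_mul_swap_mul_finRotate_apply_neg_one :
    (finRotate n * swap 0 1 * finRotate n : Perm (Fin n)) (-1) = 2 := by
  rw [Perm.mul_apply, Perm.mul_apply, finRotate_apply, finRotate_apply, neg_add_cancel,
    swap_apply_left, one_add_one_eq_two]

theorem isCycle_and_support_eq_univ_finRotate_mul_swap_mul_finRotate (hn : Even n) :
    (finRotate n * swap 0 1 * finRotate n : Perm (Fin n)).IsCycle ∧
      (finRotate n * swap 0 1 * finRotate n : Perm (Fin n)).support = univ := by
  set f : Perm (Fin n) := finRotate n * swap 0 1 * finRotate n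
  obtain ⟨m, rfl⟩ := hn
  have hm : 0 < m := by have := NeZero.ne (m + m); omega
  have : Nontrivial (Fin (m + m)) := nontrivial_iff_two_le.2 (by omega)
  have hf : ∀ x : Fin (m + m), x ≠ 0 → x ≠ -1 → f x = x + 2 :=
    fun _ => finRotate_mul_swap_mul_finRotate_apply_of_ne
  have h_zero_one : f.SameCycle 0 1 := by
    rw [← finRotate_mul_swap_mul_finRotate_apply_zero]
    exact sameCycle_apply_right.2 (.refl _ _)
  have h_one_neg_one : f.SameCycle 1 (-1) := by
    have hcast : ((1 + 2 * (m - 1) : ℕ) : Fin (m + m)) = -1 := eq_neg_of_add_eq_zero_left <| by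
      rw [← Nat.cast_add_one, show 1 + 2 * (m - 1) + 1 = m + m by omega, natCast_self]
    simpa [hcast] using sameCycle_natCast_add_two_mul hf Nat.one_pos (k := m - 1) (by omega)
  have h_neg_one_two : f.SameCycle (-1) 2 := by
    rw [← finRotate_mul_swap_mul_finRotate_apply_neg_one]
    exact sameCycle_apply_right.2 (.refl _ _)
  refine isCycle_and_support_eq_univ_of_forall_sameCycle (x := 0) fun y => ?_
  have hy := y.isLt
  rw [← cast_val_eq_self y]
  obtain ⟨j, hj | hj⟩ := Nat.even_or_odd' y.val
  · rcases j with _ | j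
    · simpa [hj] using SameCycle.refl f 0
    · rw [hj, show 2 * (j + 1) = 2 + 2 * j by ring]
      refine (h_zero_one.trans h_one_neg_one).trans (h_neg_one_two.trans ?_)
      simpa using sameCycle_natCast_add_two_mul hf Nat.two_pos (k := j) (by omega)
  · rw [hj, show 2 * j + 1 = 1 + 2 * j by ring]
    refine h_zero_one.trans ?_
    simpa using sameCycle_natCast_add_two_mul hf Nat.one_pos (k := j) (by omega)

end Fin

/-- For every even `n > 6`, the symmetric group `S_n` is generated by two `n`-cycles. -/
theorem stmt9 (n : ℕ) (hn : Even n) (h6 : 6 < n) :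
    ∃ g h : Equiv.Perm (Fin n),
      g.IsCycle ∧ g.support = Finset.univ ∧
      h.IsCycle ∧ h.support = Finset.univ ∧
      Subgroup.closure {g, h} = (⊤ : Subgroup (Equiv.Perm (Fin n))) := by
  have : NeZero n := ⟨by omega⟩
  have hrot := isCycle_finRotate_of_le (n := n) (by omega)
  have hrot_support := support_finRotate_of_le (n := n) (by omega)
  obtain ⟨hcycle, hsupport⟩ := Fin.isCycle_and_support_eq_univ_finRotate_mul_swap_mul_finRotate hn
  refine ⟨_, _, hrot, hrot_support, hcycle, hsupport, ?_⟩
  simpa [finRotate_apply] using closure_cycle_mul_swap_mul_cycle hrot hrot_support 0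
end

section
/- Every element of the alternating group A_n (n ≥ 3) is a product of two n-cycles in S_n. -/
/-
Since `g = (g * c) * c⁻¹`, it suffices to find an `n`-cycle `c` such that `g * c` is an `n`-cycle.
For an even permutation `σ` this is proved by induction on its support: write `σ = τ * σ₂`,
where `σ₂` fixes more points and `τ` is either the 3-cycle `(b a y)` with `σ b = a`, `σ a = y`, or
a product `(a a') (b b')` of two transpositions of `σ`. If `h = σ₂ * c` is an `n`-cycle with
`h b = a` (resp. `h a = b` and `h a' = b'`), then `τ * h` is again an `n`-cycle: in the first case
it moves `b` to just before `y` in the cyclic order of `h`, in the second it is the conjugate of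
`h` by `(a a')`. So the induction prescribes finitely many values of `σ * c` at fixed points of
`σ`; for `σ = 1` a cycle with the prescribed values is read off from a list.
-/

open Equiv Finset

theorem List.formPerm_append_cons_cons_apply {α : Type*} [DecidableEq α] {l₁ l₂ : List α}
    {u v : α} (hl : (l₁ ++ u :: v :: l₂).Nodup) : (l₁ ++ u :: v :: l₂).formPerm u = v := by
  rw [formPerm_eq_of_isRotated hl isRotated_append]
  exact formPerm_apply_head u v _ (isRotated_append.nodup_iff.mp hl)

section PairPoints

variable {α : Type*}

def pairPoints (L : List (α × α)) : List α := L.flatMap fun p => [p.1, p.2]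

theorem pairPoints_append (L₁ L₂ : List (α × α)) :
    pairPoints (L₁ ++ L₂) = pairPoints L₁ ++ pairPoints L₂ :=
  List.flatMap_append

theorem fst_mem_pairPoints {L : List (α × α)} {p : α × α} (hp : p ∈ L) : p.1 ∈ pairPoints L :=
  List.mem_flatMap.mpr ⟨p, hp, by simp⟩

theorem snd_mem_pairPoints {L : List (α × α)} {p : α × α} (hp : p ∈ L) : p.2 ∈ pairPoints L :=
  List.mem_flatMap.mpr ⟨p, hp, by simp⟩

end PairPoints

namespace Equiv.Perm

variable {α : Type*} [DecidableEq α] [Fintype α]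

theorem card_support_lt_of_forall_fixed {σ τ : Perm α} (h : ∀ x, σ x = x → τ x = x) {a : α}
    (hσa : σ a ≠ a) (hτa : τ a = a) : #τ.support < #σ.support :=
  card_lt_card ⟨fun x hx => mem_support.mpr fun hσx => mem_support.mp hx (h x hσx),
    fun hsub => mem_support.mp (hsub (mem_support.mpr hσa)) hτa⟩

theorem IsCycle.swap_mul_of_notMem_support {f : Perm α} (hf : f.IsCycle) {b y : α}
    (hy : y ∈ f.support) (hb : b ∉ f.support) :
    (swap b y * f).IsCycle ∧ (swap b y * f).support = insert b f.support := by
  obtain ⟨l, hl⟩ : ∃ l, f.toList y = y :: l := by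
    cases h : f.toList y with
    | nil => exact absurd h (by simpa using hy)
    | cons z l =>
      have := toList_getElem_zero f y hy
      simp only [h, List.getElem_cons_zero] at this
      exact ⟨l, by rw [this]⟩
  have hfl : (y :: l).formPerm = f := by
    rw [← hl, formPerm_toList, hf.cycleOf_eq (mem_support.mp hy)]
  have hnd : (y :: l).Nodup := hl ▸ nodup_toList f y
  have hbl : b ∉ y :: l := fun h => hb <| by
    rw [← hl, mem_toList_iff] at h
    exact h.1.mem_support_iff.mp hy
  have hlen : 2 ≤ (y :: l).length := hl ▸ two_le_length_toList_iff_mem_support.mpr hy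
  have hnd' : (b :: y :: l).Nodup := List.nodup_cons.mpr ⟨hbl, hnd⟩
  rw [← hfl, ← List.formPerm_cons_cons]
  refine ⟨List.isCycle_formPerm hnd' (by simp only [List.length_cons] at hlen ⊢; omega), ?_⟩
  rw [List.support_formPerm_of_nodup _ hnd' (by simp),
    List.support_formPerm_of_nodup _ hnd (by rintro x ⟨⟩; simp at hlen), List.toFinset_cons]

def IsFullCycle (f : Perm α) : Prop := f.IsCycle ∧ f.support = univ

variable {f : Perm α}

theorem IsFullCycle.conj (hf : f.IsFullCycle) (g : Perm α) : (g * f * g⁻¹).IsFullCycle :=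
  ⟨hf.1.conj, by rw [support_conj, hf.2, map_univ_equiv]⟩

theorem IsFullCycle.inv (hf : f.IsFullCycle) : f⁻¹.IsFullCycle :=
  ⟨hf.1.inv, by rw [support_inv, hf.2]⟩

theorem IsFullCycle.apply_ne (hf : f.IsFullCycle) (x : α) : f x ≠ x :=
  mem_support.mp (hf.2 ▸ mem_univ x)

theorem IsFullCycle.apply_apply_ne (hf : f.IsFullCycle) (hα : 3 ≤ Fintype.card α) (x : α) :
    f (f x) ≠ x := by
  intro h
  have := congrArg (fun g : Perm α => #g.support)
    (hf.1.eq_swap_of_apply_apply_eq_self (hf.apply_ne x) h)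
  simp only [hf.2, card_univ, card_support_swap (hf.apply_ne x).symm] at this
  omega

/-- Removing `b` from the cycle and reinserting it just before `y`. -/
theorem IsFullCycle.swap_mul_swap_mul (hf : f.IsFullCycle) (hα : 3 ≤ Fintype.card α) {b y : α}
    (hyb : y ≠ b) : (swap b y * (swap b (f b) * f)).IsFullCycle := by
  have hsupp : (swap b (f b) * f).support = univ \ {b} := by
    rw [support_swap_mul_eq f b (hf.apply_apply_ne hα b), hf.2]
  have hremoved := hf.1.swap_mul (hf.apply_ne b) (hf.apply_apply_ne hα b)
  obtain ⟨hcycle, hsupp'⟩ :=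
    hremoved.swap_mul_of_notMem_support (b := b) (y := y) (by simp [hsupp, hyb]) (by simp [hsupp])
  exact ⟨hcycle, by rw [hsupp', hsupp]; simp⟩

theorem isFullCycle_formPerm (hα : 2 ≤ Fintype.card α) {l : List α} (hl : l.Nodup)
    (hmem : ∀ x, x ∈ l) : l.formPerm.IsFullCycle := by
  have htf : l.toFinset = univ := eq_univ_of_forall fun x => List.mem_toFinset.mpr (hmem x)
  have hlen : l.length = Fintype.card α := by
    rw [← List.toFinset_card_of_nodup hl, htf, card_univ]
  refine ⟨List.isCycle_formPerm hl (hlen ▸ hα), ?_⟩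
  rw [List.support_formPerm_of_nodup l hl, htf]
  rintro x rfl
  simp at hlen
  omega

theorem exists_isFullCycle_apply_eq (hα : 2 ≤ Fintype.card α) (L : List (α × α))
    (hL : (pairPoints L).Nodup) : ∃ c : Perm α, c.IsFullCycle ∧ ∀ p ∈ L, c p.1 = p.2 := by
  set l := pairPoints L ++ (univ \ (pairPoints L).toFinset).toList
  have hl : l.Nodup := hL.append (Finset.nodup_toList _) fun x hx hx' => by simp_all
  refine ⟨l.formPerm, isFullCycle_formPerm hα hl fun x => ?_, fun p hp => ?_⟩
  · by_cases hx : x ∈ pairPoints L <;> simp [l, hx]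
  · obtain ⟨L₁, L₂, rfl⟩ := List.append_of_mem hp
    have hsplit : l = pairPoints L₁ ++ p.1 :: p.2 :: (pairPoints L₂ ++
        (univ \ (pairPoints (L₁ ++ p :: L₂)).toFinset).toList) := by
      simp [l, pairPoints]
    rw [hsplit] at hl ⊢
    exact List.formPerm_append_cons_cons_apply hl

def Completable (σ : Perm α) : Prop :=
  ∀ L : List (α × α), (pairPoints L).Nodup → (∀ x ∈ pairPoints L, σ x = x) →
    ∃ c : Perm α, c.IsFullCycle ∧ (σ * c).IsFullCycle ∧ ∀ p ∈ L, (σ * c) p.1 = p.2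

theorem completable_one (hα : 2 ≤ Fintype.card α) : Completable (1 : Perm α) :=
  fun L hL _ => (exists_isFullCycle_apply_eq hα L hL).imp fun c hc => by simpa using hc

theorem Completable.of_mul {σ τ : Perm α} {N : List (α × α)}
    (ih : ∀ σ₂ : Perm α, #σ₂.support < #σ.support → sign σ₂ = 1 → Completable σ₂)
    (hσ : sign σ = 1) (hτ : sign τ = 1) (hfix : ∀ x, σ x = x → τ x = x)
    (hN : (pairPoints N).Nodup) (hNσ : ∀ x ∈ pairPoints N, σ x ≠ x ∧ τ x = σ x) (hN₀ : N ≠ [])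
    (hfull : ∀ h : Perm α, h.IsFullCycle → (∀ p ∈ N, h p.1 = p.2) → (τ * h).IsFullCycle) :
    Completable σ := by
  intro L hL hLσ
  set σ₂ := τ⁻¹ * σ
  have hσ₂ : ∀ x, σ x = x → σ₂ x = x := fun x hx => by
    rw [mul_apply, hx, inv_eq_iff_eq, hfix x hx]
  have hσ₂N : ∀ x ∈ pairPoints N, σ₂ x = x := fun x hx => by
    rw [mul_apply, inv_eq_iff_eq, (hNσ x hx).2]
  obtain ⟨p, hp⟩ := List.exists_mem_of_ne_nil N hN₀
  have hcard : #σ₂.support < #σ.support :=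
    card_support_lt_of_forall_fixed hσ₂ (hNσ _ (fst_mem_pairPoints hp)).1
      (hσ₂N _ (fst_mem_pairPoints hp))
  have hNL : (pairPoints (N ++ L)).Nodup := by
    rw [pairPoints_append]
    exact hN.append hL fun x hxN hxL => (hNσ x hxN).1 (hLσ x hxL)
  have hNLσ₂ : ∀ x ∈ pairPoints (N ++ L), σ₂ x = x := by
    intro x hx
    rcases List.mem_append.mp (pairPoints_append N L ▸ hx) with hx | hx
    exacts [hσ₂N x hx, hσ₂ x (hLσ x hx)]
  obtain ⟨c, hc, hσ₂c, hpairs⟩ := ih σ₂ hcard (by simp [σ₂, hσ, hτ]) (N ++ L) hNL hNLσ₂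
  have hσc : σ * c = τ * (σ₂ * c) := by simp [σ₂, ← mul_assoc]
  refine ⟨c, hc, hσc ▸ hfull _ hσ₂c fun p hp => hpairs p (List.mem_append_left L hp),
    fun p hp => ?_⟩
  rw [hσc, mul_apply, hpairs p (List.mem_append_right N hp)]
  exact hfix _ (hLσ _ (snd_mem_pairPoints hp))

theorem completable_of_apply_eq_of_apply_eq (hα : 3 ≤ Fintype.card α) {σ : Perm α}
    (ih : ∀ σ₂ : Perm α, #σ₂.support < #σ.support → sign σ₂ = 1 → Completable σ₂)
    (hσ : sign σ = 1) {a b y : α} (hσb : σ b = a) (hσa : σ a = y) (hba : b ≠ a) (hby : b ≠ y) :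
    Completable σ := by
  have hay : a ≠ y := fun h => hba (σ.injective (by rw [hσb, hσa, h]))
  have hmoved : ∀ x, σ x = x → x ≠ a ∧ x ≠ b ∧ x ≠ y := fun x hx =>
    ⟨fun h => hay (by rw [← hσa, ← h, hx]), fun h => hba (by rw [← hσb, ← h, hx]),
      fun h => hay (σ.injective (by rw [hσa, ← h, hx]))⟩
  refine Completable.of_mul (τ := swap b y * swap b a) (N := [(b, a)]) ih hσ
    (by simp [sign_swap hby, sign_swap hba]) (fun x hx => ?_) (by simp [pairPoints, hba])
    (fun x hx => ?_) (List.cons_ne_nil _ _) (fun h hh hpairs => ?_)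
  · obtain ⟨hxa, hxb, hxy⟩ := hmoved x hx
    rw [mul_apply, swap_apply_of_ne_of_ne hxb hxa, swap_apply_of_ne_of_ne hxb hxy]
  · simp only [pairPoints, List.flatMap_cons, List.flatMap_nil, List.append_nil, List.mem_cons,
      List.not_mem_nil, or_false] at hx
    rcases hx with rfl | rfl
    · simp [hσb, hba.symm, swap_apply_of_ne_of_ne hba.symm hay]
    · simp [hσa, hay.symm]
  · have hhb : h b = a := hpairs (b, a) List.mem_cons_self
    rw [mul_assoc, ← hhb]
    exact hh.swap_mul_swap_mul hα hby.symm

theorem completable_of_two_transpositions {σ : Perm α}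
    (ih : ∀ σ₂ : Perm α, #σ₂.support < #σ.support → sign σ₂ = 1 → Completable σ₂)
    (hσ : sign σ = 1) {a a' b b' : α} (hσa : σ a = a') (hσa' : σ a' = a) (hσb : σ b = b')
    (hσb' : σ b' = b) (hnd : [a, b, a', b'].Nodup) : Completable σ := by
  simp only [List.nodup_cons, List.mem_cons, List.not_mem_nil, not_or, List.nodup_nil,
    ← ne_eq] at hnd
  obtain ⟨⟨hab, haa', hab', -⟩, ⟨hba', hbb', -⟩, ⟨ha'b', -⟩, -, -⟩ := hnd
  have hmoved : ∀ x, σ x = x → x ≠ a ∧ x ≠ a' ∧ x ≠ b ∧ x ≠ b' := by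
    rintro x hx
    refine ⟨?_, ?_, ?_, ?_⟩ <;> rintro rfl
    exacts [haa' (hx.symm.trans hσa), haa' (hσa'.symm.trans hx), hbb' (hx.symm.trans hσb),
      hbb' (hσb'.symm.trans hx)]
  refine Completable.of_mul (τ := swap a a' * swap b b') (N := [(a, b), (a', b')]) ih hσ
    (by simp [sign_swap haa', sign_swap hbb']) (fun x hx => ?_)
    (by simp [pairPoints, *]) (fun x hx => ?_) (List.cons_ne_nil _ _) (fun h hh hpairs => ?_)
  · obtain ⟨hxa, hxa', hxb, hxb'⟩ := hmoved x hx
    rw [mul_apply, swap_apply_of_ne_of_ne hxb hxb', swap_apply_of_ne_of_ne hxa hxa']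
  · simp only [pairPoints, List.flatMap_cons, List.flatMap_nil, List.append_nil, List.mem_cons,
      List.cons_append, List.nil_append, List.not_mem_nil, or_false] at hx
    rcases hx with rfl | rfl | rfl | rfl
    · refine ⟨hσa ▸ haa'.symm, ?_⟩
      rw [hσa, mul_apply, swap_apply_of_ne_of_ne hab hab', swap_apply_left]
    · refine ⟨hσb ▸ hbb'.symm, ?_⟩
      rw [hσb, mul_apply, swap_apply_left, swap_apply_of_ne_of_ne hab'.symm ha'b'.symm]
    · refine ⟨hσa' ▸ haa', ?_⟩
      rw [hσa', mul_apply, swap_apply_of_ne_of_ne hba'.symm ha'b', swap_apply_right]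
    · refine ⟨hσb' ▸ hbb', ?_⟩
      rw [hσb', mul_apply, swap_apply_right, swap_apply_of_ne_of_ne hab.symm hba']
  · have hha : h a = b := hpairs (a, b) List.mem_cons_self
    have hha' : h a' = b' := hpairs (a', b') (List.mem_cons_of_mem _ List.mem_cons_self)
    have hconj : swap a a' * swap b b' * h = swap a a' * h * (swap a a')⁻¹ := by
      rw [← hha, ← hha', swap_apply_apply, swap_inv]
      group
    rw [hconj]
    exact hh.conj _

theorem exists_nodup_of_involutive {σ : Perm α} (hσ : sign σ = 1) (hσ₁ : σ ≠ 1)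
    (hinv : ∀ x, σ (σ x) = x) : ∃ a b, [a, b, σ a, σ b].Nodup := by
  have hcard : 2 < #σ.support := by
    have h0 : #σ.support ≠ 0 := by rwa [Ne, card_eq_zero, support_eq_empty_iff]
    have h2 : #σ.support ≠ 2 := fun h => by
      simp [(card_support_eq_two.mp h).sign_eq] at hσ
    have := card_support_ne_one σ
    omega
  obtain ⟨a, ha⟩ := nonempty_of_ne_empty (support_eq_empty_iff.not.mpr hσ₁)
  obtain ⟨b, hb, hbσ⟩ := exists_mem_notMem_of_card_lt_card (s := {a, σ a})
    ((card_le_two).trans_lt hcard)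
  rw [mem_support] at ha hb
  simp only [mem_insert, mem_singleton, not_or] at hbσ
  refine ⟨a, b, ?_⟩
  simp only [List.nodup_cons, List.mem_cons, List.not_mem_nil, List.nodup_nil, not_or, or_false,
    and_true, not_false_eq_true]
  exact ⟨⟨Ne.symm hbσ.1, Ne.symm ha, fun h => hbσ.2 (by rw [h, hinv])⟩, ⟨hbσ.2, Ne.symm hb⟩,
    fun h => hbσ.1 (σ.injective h).symm⟩

theorem completable_of_sign_eq_one (hα : 3 ≤ Fintype.card α) (σ : Perm α) (hσ : sign σ = 1) :
    Completable σ := by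
  induction hn : #σ.support using Nat.strong_induction_on generalizing σ with
  | _ n ih =>
  subst hn
  replace ih : ∀ σ₂ : Perm α, #σ₂.support < #σ.support → sign σ₂ = 1 → Completable σ₂ :=
    fun σ₂ hlt hσ₂ => ih _ hlt σ₂ hσ₂ rfl
  by_cases hσ₁ : σ = 1
  · exact hσ₁ ▸ completable_one (by omega)
  by_cases hlong : ∃ a, σ a ≠ a ∧ σ (σ a) ≠ a
  · obtain ⟨a, ha, haa⟩ := hlong
    have hσb : σ (σ⁻¹ a) = a := σ.apply_symm_apply a
    exact completable_of_apply_eq_of_apply_eq hα ih hσ hσb rfl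
      (fun h => ha (by rwa [h] at hσb)) (fun h => haa (by rwa [h] at hσb))
  · have hinv : ∀ x, σ (σ x) = x := fun x => by
      by_cases hx : σ x = x
      · rw [hx, hx]
      · exact not_and_not_right.mp (not_exists.mp hlong x) hx
    obtain ⟨a, b, hnd⟩ := exists_nodup_of_involutive hσ hσ₁ hinv
    exact completable_of_two_transpositions ih hσ rfl (hinv a) rfl (hinv b) hnd

end Equiv.Perm

/-- Every element of the alternating group `A_n` (`n ≥ 3`) is a product of two `n`-cycles. -/
theorem stmt10 (n : ℕ) (h3 : 3 ≤ n) (g : Equiv.Perm (Fin n))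
    (hg : g ∈ alternatingGroup (Fin n)) :
    ∃ x y : Equiv.Perm (Fin n),
      x.IsCycle ∧ x.support = Finset.univ ∧
      y.IsCycle ∧ y.support = Finset.univ ∧ g = x * y := by
  obtain ⟨c, hc, hgc, -⟩ := Perm.completable_of_sign_eq_one (by simpa using h3) g
    (Perm.mem_alternatingGroup.mp hg) [] (by simp [pairPoints]) (by simp [pairPoints])
  exact ⟨g * c, c⁻¹, hgc.1, hgc.2, hc.inv.1, hc.inv.2, by group⟩
end
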